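/- arXiv:2205.05643 — 4 statements merged into one kernel-verified Lean document; each statement's English description precedes it below -/
import Mathlib

section
/- For every primitive string s of length n over a finite alphabet Σ and every context adaptive ordering (π_x), the relation ≺ is a strict linear order on the set {R_0, …, R_{n−1}} of cyclic rotations of s: it is irreflexive, transitive, and any two distinct rotations are ≺-comparable (exactly one of u ≺ v, v ≺ u holds). -/
open scoped Classical

variable {A : Type*}

/-- Longest common prefix of two lists. -/
def lcp [DecidableEq A] : List A → List A → List A
  | a :: as, b :: bs => if a = b then a :: lcp as bs else []
  | _, _ => []

/-- A string is primitive if its cyclic rotations are pairwise distinct. -/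
def Primitive (s : List A) : Prop :=
  ∀ i j, i < s.length → j < s.length → s.rotate i = s.rotate j → i = j

/-- The context-adaptive comparison relation on rotations: letting `x` be the
longest common prefix of `u` and `v`, we have `u ≺ v` iff the symbol of `u`
just after `x` is `π x`-smaller than the corresponding symbol of `v`. -/
def Prec [DecidableEq A] (π : List A → A → A → Prop) (u v : List A) : Prop :=
  ∃ a b, u[(lcp u v).length]? = some a ∧ v[(lcp u v).length]? = some b ∧
    π (lcp u v) a b

/-!
`u ≺ v` holds exactly when, at some position `l`, the words `u` and `v` agree before `l` and
their letters at `l` are ordered by `π (u.take l)`: these letters differ, so `l` is necessarily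
the length of the longest common prefix. Then witnesses `l₁` for `u ≺ v` and `l₂` for `v ≺ w`
yield the witness `min l₁ l₂` for `u ≺ w`; only when `l₁ = l₂` are both comparisons made in the
same context, and there transitivity of the single order `π (u.take l₁)` is used. Totality holds
because distinct words of equal length differ at a position inside both.
-/

namespace List

theorem take_eq_take_of_le {u v : List A} {l m : ℕ} (h : u.take l = v.take l) (hm : m ≤ l) :
    u.take m = v.take m := by
  rw [← min_eq_left hm, ← take_take, h, take_take]

theorem getElem?_eq_of_take_eq {u v : List A} {l m : ℕ} (h : u.take l = v.take l) (hm : m < l) :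
    u[m]? = v[m]? := by
  rw [← getElem?_take_of_lt hm, h, getElem?_take_of_lt hm]

end List

section Lcp

variable [DecidableEq A]

theorem lcp_self (u : List A) : lcp u u = u := by
  induction u with
  | nil => rfl
  | cons a u ih => simp [lcp, ih]

theorem lcp_comm (u v : List A) : lcp u v = lcp v u := by
  induction u generalizing v with
  | nil => cases v <;> rfl
  | cons a u ih =>
    cases v with
    | nil => rfl
    | cons b v =>
      by_cases h : a = b
      · subst h; simp [lcp, ih]
      · simp [lcp, h, Ne.symm h]

theorem take_length_lcp_left (u v : List A) : u.take (lcp u v).length = lcp u v := by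
  induction u generalizing v with
  | nil => simp [lcp]
  | cons a u ih =>
    cases v with
    | nil => simp [lcp]
    | cons b v =>
      by_cases h : a = b
      · subst h; simpa [lcp] using ih v
      · simp [lcp, h]

theorem take_length_lcp_right (u v : List A) : v.take (lcp u v).length = lcp u v := by
  rw [lcp_comm]; exact take_length_lcp_left v u

theorem getElem?_length_lcp_ne {u v : List A} (h : u ≠ v) :
    u[(lcp u v).length]? ≠ v[(lcp u v).length]? := by
  induction u generalizing v with
  | nil =>
    cases v with
    | nil => exact absurd rfl h
    | cons b v => simp [lcp]
  | cons a u ih =>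
    cases v with
    | nil => simp [lcp]
    | cons b v =>
      by_cases hab : a = b
      · subst hab
        simpa [lcp] using ih (v := v) (by rintro rfl; exact h rfl)
      · simp [lcp, hab]

theorem lcp_eq_take {u v : List A} {l : ℕ} (h : u.take l = v.take l) (hl : u[l]? ≠ v[l]?) :
    lcp u v = u.take l := by
  induction u generalizing v l with
  | nil =>
    cases v with
    | nil => simp at hl
    | cons b v => cases l <;> simp_all [lcp]
  | cons a u ih =>
    cases v with
    | nil => cases l <;> simp_all [lcp]
    | cons b v =>
      cases l with
      | zero => simp_all [lcp]
      | succ l =>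
        simp only [List.take_succ_cons, List.cons.injEq] at h
        obtain ⟨rfl, h⟩ := h
        simp [lcp, ih h (by simpa using hl)]

end Lcp

section Prec

variable [DecidableEq A] {π : List A → A → A → Prop} {u v w : List A}

theorem prec_iff_exists [∀ x, Std.Irrefl (π x)] :
    Prec π u v ↔ ∃ l a b, u.take l = v.take l ∧ u[l]? = some a ∧ v[l]? = some b ∧
      π (u.take l) a b := by
  constructor
  · rintro ⟨a, b, ha, hb, hab⟩
    refine ⟨(lcp u v).length, a, b, ?_, ha, hb, ?_⟩
    · rw [take_length_lcp_left, take_length_lcp_right]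
    · rwa [take_length_lcp_left]
  · rintro ⟨l, a, b, htake, ha, hb, hab⟩
    have hne : a ≠ b := by rintro rfl; exact irrefl a hab
    have hlcp : lcp u v = u.take l := lcp_eq_take htake (by simp [ha, hb, hne])
    have hlen : (lcp u v).length = l := by
      rw [hlcp, List.length_take, min_eq_left]
      exact (List.getElem?_eq_some_iff.mp ha).1.le
    exact ⟨a, b, hlen ▸ ha, hlen ▸ hb, hlcp ▸ hab⟩

theorem prec_irrefl : ¬ Prec π u u := by
  rintro ⟨a, b, ha, -, -⟩
  simp [lcp_self] at ha

theorem prec_trans [∀ x, IsStrictOrder A (π x)] (huv : Prec π u v) (hvw : Prec π v w) :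
    Prec π u w := by
  rw [prec_iff_exists] at huv hvw ⊢
  obtain ⟨l₁, a, b, huv, ha, hb, hab⟩ := huv
  obtain ⟨l₂, b', c, hvw, hb', hc, hbc⟩ := hvw
  rcases lt_trichotomy l₁ l₂ with hlt | rfl | hgt
  · refine ⟨l₁, a, b, huv.trans (List.take_eq_take_of_le hvw hlt.le), ha, ?_, hab⟩
    rw [← List.getElem?_eq_of_take_eq hvw hlt, hb]
  · obtain rfl : b = b' := Option.some_injective _ (hb.symm.trans hb')
    exact ⟨l₁, a, c, huv.trans hvw, ha, hc, _root_.trans hab (huv ▸ hbc)⟩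
  · have huv₂ := List.take_eq_take_of_le huv hgt.le
    refine ⟨l₂, b', c, huv₂.trans hvw, ?_, hc, huv₂ ▸ hbc⟩
    rw [List.getElem?_eq_of_take_eq huv hgt, hb']

theorem prec_asymm [∀ x, IsStrictOrder A (π x)] (h : Prec π u v) : ¬ Prec π v u :=
  fun h' => prec_irrefl (prec_trans h h')

theorem prec_or_prec_of_ne [∀ x, Std.Trichotomous (π x)] (hlen : u.length = v.length)
    (h : u ≠ v) : Prec π u v ∨ Prec π v u := by
  have hne := getElem?_length_lcp_ne h
  have hlt : (lcp u v).length < u.length := by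
    by_contra! hge
    exact hne <| by rw [List.getElem?_eq_none hge, List.getElem?_eq_none (hlen ▸ hge)]
  obtain ⟨a, ha⟩ : ∃ a, u[(lcp u v).length]? = some a := ⟨_, List.getElem?_eq_getElem hlt⟩
  obtain ⟨b, hb⟩ : ∃ b, v[(lcp u v).length]? = some b :=
    ⟨_, List.getElem?_eq_getElem (hlen ▸ hlt)⟩
  rcases trichotomous_of (π (lcp u v)) a b with hab | rfl | hba
  · exact .inl ⟨a, b, ha, hb, hab⟩
  · exact absurd (ha.trans hb.symm) hne
  · rw [lcp_comm] at ha hb hba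
    exact .inr ⟨b, a, hb, ha, hba⟩

end Prec

theorem stmt0_general [DecidableEq A]
    (π : List A → A → A → Prop) (hπ : ∀ x, IsStrictTotalOrder A (π x))
    (s : List A) :
    (∀ i < s.length, ¬ Prec π (s.rotate i) (s.rotate i)) ∧
    (∀ i < s.length, ∀ j < s.length, ∀ k < s.length,
      Prec π (s.rotate i) (s.rotate j) → Prec π (s.rotate j) (s.rotate k) →
      Prec π (s.rotate i) (s.rotate k)) ∧
    (∀ i < s.length, ∀ j < s.length, s.rotate i ≠ s.rotate j →
      (Prec π (s.rotate i) (s.rotate j) ∧ ¬ Prec π (s.rotate j) (s.rotate i)) ∨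
      (Prec π (s.rotate j) (s.rotate i) ∧ ¬ Prec π (s.rotate i) (s.rotate j))) := by
  have := hπ
  refine ⟨fun _ _ => prec_irrefl, fun _ _ _ _ _ _ => prec_trans, fun _ _ _ _ hne => ?_⟩
  rcases prec_or_prec_of_ne (π := π) (by simp) hne with h | h
  · exact .inl ⟨h, prec_asymm h⟩
  · exact .inr ⟨h, prec_asymm h⟩

/-- for every primitive string `s` and every context adaptive
ordering `π`, the relation `≺` is a strict linear order on the cyclic rotations
of `s`: irreflexive, transitive, and any two distinct rotations are comparable
(exactly one of `u ≺ v`, `v ≺ u` holds). -/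
theorem stmt0 [Fintype A] [DecidableEq A]
    (π : List A → A → A → Prop) (hπ : ∀ x, IsStrictTotalOrder A (π x))
    (s : List A) (hs : 1 ≤ s.length) (hprim : Primitive s) :
    (∀ i < s.length, ¬ Prec π (s.rotate i) (s.rotate i)) ∧
    (∀ i < s.length, ∀ j < s.length, ∀ k < s.length,
      Prec π (s.rotate i) (s.rotate j) → Prec π (s.rotate j) (s.rotate k) →
      Prec π (s.rotate i) (s.rotate k)) ∧
    (∀ i < s.length, ∀ j < s.length, s.rotate i ≠ s.rotate j →
      (Prec π (s.rotate i) (s.rotate j) ∧ ¬ Prec π (s.rotate j) (s.rotate i)) ∨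
      (Prec π (s.rotate j) (s.rotate i) ∧ ¬ Prec π (s.rotate i) (s.rotate j))) :=
  stmt0_general π hπ s
end

section
/- For every primitive string s over Σ, every context adaptive ordering, and every string x over Σ, the set of rotations of s having x as a prefix is an interval with respect to ≺: if u ≺ v ≺ w and both u and w have x as a prefix, then v has x as a prefix. -/
/-!
Let `p` and `q` be the longest common prefixes of `u, v` and of `v, w`. If `x` is no longer than
one of them, `x` is a prefix of that one and hence of `v`. Otherwise `p` and `q` are shorter than
`x`, so `u` and `w` agree at positions `|p|` and `|q|`. If `|p| < |q|` this makes `u` and `v` agree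
at `|p|`, contradicting `u ≺ v`; symmetrically for `|q| < |p|`. If `|p| = |q|` then `p = q`, and
`u ≺ v ≺ w` compares the letters at `|p|` in the strict order `π_p`, so `u` and `w` differ there.
-/

open scoped Classical

variable {A : Type*}

theorem List.getElem?_eq_of_prefix_of_prefix {l l₁ l₂ : List A} (h₁ : l <+: l₁) (h₂ : l <+: l₂)
    {n : ℕ} (hn : n < l.length) : l₁[n]? = l₂[n]? :=
  (List.prefix_iff_getElem?.1 h₁ n hn).trans (List.prefix_iff_getElem?.1 h₂ n hn).symm

section Lcp

variable [DecidableEq A]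

theorem lcp_prefix_left : ∀ u v : List A, lcp u v <+: u
  | [], _ => by simp [lcp]
  | _ :: _, [] => by simp [lcp]
  | a :: as, b :: bs => by
    simp only [lcp]
    split
    · exact List.cons_prefix_cons.2 ⟨rfl, lcp_prefix_left as bs⟩
    · exact List.nil_prefix

theorem lcp_prefix_right : ∀ u v : List A, lcp u v <+: v
  | [], _ => by simp [lcp]
  | _ :: _, [] => by simp [lcp]
  | a :: as, b :: bs => by
    simp only [lcp]
    split
    · next h => exact List.cons_prefix_cons.2 ⟨h, lcp_prefix_right as bs⟩
    · exact List.nil_prefix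

variable {π : List A → A → A → Prop} {u v w : List A}

theorem Prec.getElem?_ne (hπ : ∀ y, Std.Irrefl (π y)) (huv : Prec π u v) :
    u[(lcp u v).length]? ≠ v[(lcp u v).length]? := by
  obtain ⟨a, b, ha, hb, hab⟩ := huv
  rw [ha, hb, Ne, Option.some_inj]
  rintro rfl
  exact (hπ _).irrefl a hab

theorem Prec.getElem?_ne_of_lcp_eq (hπ : ∀ y, IsStrictOrder A (π y)) (huv : Prec π u v)
    (hvw : Prec π v w) (hlcp : lcp u v = lcp v w) :
    u[(lcp u v).length]? ≠ w[(lcp u v).length]? := by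
  obtain ⟨a, b, ha, hb, hab⟩ := huv
  obtain ⟨b', c, hb', hc, hbc⟩ := hvw
  rw [← hlcp] at hb' hc hbc
  obtain rfl : b = b' := Option.some_inj.1 (hb.symm.trans hb')
  rw [ha, hc, Ne, Option.some_inj]
  rintro rfl
  exact (hπ _).irrefl a ((hπ _).trans _ _ _ hab hbc)

theorem Prec.prefix_of_prefix_of_prefix (hπ : ∀ y, IsStrictOrder A (π y)) {x : List A}
    (huv : Prec π u v) (hvw : Prec π v w) (hxu : x <+: u) (hxw : x <+: w) : x <+: v := by
  set p := lcp u v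
  set q := lcp v w
  by_cases hxp : x.length ≤ p.length
  · exact (List.prefix_of_prefix_length_le hxu (lcp_prefix_left u v) hxp).trans
      (lcp_prefix_right u v)
  by_cases hxq : x.length ≤ q.length
  · exact (List.prefix_of_prefix_length_le hxw (lcp_prefix_right v w) hxq).trans
      (lcp_prefix_left v w)
  push Not at hxp hxq
  exfalso
  rcases lt_trichotomy p.length q.length with hpq | hpq | hpq
  · refine huv.getElem?_ne (fun y => (hπ y).toIrrefl) ?_
    calc u[p.length]? = w[p.length]? := List.getElem?_eq_of_prefix_of_prefix hxu hxw hxp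
      _ = v[p.length]? :=
        List.getElem?_eq_of_prefix_of_prefix (lcp_prefix_right v w) (lcp_prefix_left v w) hpq
  · have hp_eq_q : p = q :=
      (List.prefix_of_prefix_length_le (lcp_prefix_right u v) (lcp_prefix_left v w)
        hpq.le).eq_of_length hpq
    exact huv.getElem?_ne_of_lcp_eq hπ hvw hp_eq_q
      (List.getElem?_eq_of_prefix_of_prefix hxu hxw hxp)
  · refine hvw.getElem?_ne (fun y => (hπ y).toIrrefl) ?_
    calc v[q.length]? = u[q.length]? :=
          List.getElem?_eq_of_prefix_of_prefix (lcp_prefix_right u v) (lcp_prefix_left u v) hpq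
      _ = w[q.length]? := List.getElem?_eq_of_prefix_of_prefix hxu hxw hxq

end Lcp

theorem stmt1_general [DecidableEq A]
    (π : List A → A → A → Prop) (hπ : ∀ x, IsStrictTotalOrder A (π x))
    (s : List A)
    (x : List A)
    (i j k : ℕ)
    (huv : Prec π (s.rotate i) (s.rotate j))
    (hvw : Prec π (s.rotate j) (s.rotate k))
    (hxu : x <+: s.rotate i) (hxw : x <+: s.rotate k) :
    x <+: s.rotate j :=
  huv.prefix_of_prefix_of_prefix (fun y => (hπ y).toIsStrictOrder) hvw hxu hxw

/-- the set of rotations of `s` having `x` as a prefix is an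
interval with respect to `≺`: if `u ≺ v ≺ w` and both `u` and `w` have `x` as
a prefix, then `v` has `x` as a prefix. -/
theorem stmt1 [Fintype A] [DecidableEq A]
    (π : List A → A → A → Prop) (hπ : ∀ x, IsStrictTotalOrder A (π x))
    (s : List A) (hs : 1 ≤ s.length) (hprim : Primitive s)
    (x : List A)
    (i j k : ℕ) (hi : i < s.length) (hj : j < s.length) (hk : k < s.length)
    (huv : Prec π (s.rotate i) (s.rotate j))
    (hvw : Prec π (s.rotate j) (s.rotate k))
    (hxu : x <+: s.rotate i) (hxw : x <+: s.rotate k) :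
    x <+: s.rotate j :=
  stmt1_general π hπ s x i j k huv hvw hxu hxw
end

section
/- Let s be a primitive string of length n over Σ, c ∈ Σ, and y a string with |y| < n. Then the number of cyclic rotations of s having c·y as a prefix equals the number of cyclic rotations of s having y as a prefix whose last symbol is c. -/
open scoped Classical

variable {A : Type*}

/-!
Rotating by one moves the first symbol to the end: `c·y` is a prefix of `R_i` exactly when
`y` is a prefix of `R_{i+1}` and `R_{i+1}` ends in `c` (here `|y| < n` rules out `y = R_{i+1}`).
So `i ↦ i + 1 mod n` is a bijection between the two sets of indices being counted.
-/

open Finset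

theorem List.cons_prefix_iff_prefix_rotate_one {α : Type*} {c : α} {y l : List α}
    (hy : y.length < l.length) :
    c :: y <+: l ↔ y <+: l.rotate 1 ∧ (l.rotate 1).getLast? = some c := by
  cases l with
  | nil => simp at hy
  | cons a t =>
    have hyt : y ≠ t ++ [a] := fun h => by simp [h] at hy
    simp [List.prefix_concat_iff, hyt, and_comm, eq_comm]

theorem Finset.card_filter_range_succ_mod (n : ℕ) (p : ℕ → Prop) [DecidablePred p] :
    #{i ∈ range n | p ((i + 1) % n)} = #{i ∈ range n | p i} := by
  cases n with
  | zero => rfl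
  | succ m =>
    rw [card_filter, card_filter, sum_range_succ, sum_range_succ', Nat.mod_self]
    congr 1
    refine sum_congr rfl fun i hi => ?_
    rw [Nat.mod_eq_of_lt (by simpa using hi)]

theorem stmt4_general [DecidableEq A] (s : List A)
    (c : A) (y : List A) (hy : y.length < s.length) :
    ((Finset.range s.length).filter (fun i => (c :: y) <+: s.rotate i)).card =
    ((Finset.range s.length).filter (fun i => y <+: s.rotate i ∧
        (s.rotate i).getLast? = some c)).card := by
  symm
  rw [← card_filter_range_succ_mod]
  congr 1
  refine filter_congr fun i _ => ?_
  rw [List.rotate_mod, ← List.rotate_rotate]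
  exact (List.cons_prefix_iff_prefix_rotate_one (by simpa using hy)).symm

/-- for a primitive string `s`, a symbol `c` and a string `y` with
`|y| < n`, the number of cyclic rotations of `s` having `c·y` as a prefix
equals the number of cyclic rotations of `s` having `y` as a prefix whose last
symbol is `c`. -/
theorem stmt4 [Fintype A] [DecidableEq A]
    (s : List A) (hs : 1 ≤ s.length) (hprim : Primitive s)
    (c : A) (y : List A) (hy : y.length < s.length) :
    ((Finset.range s.length).filter (fun i => (c :: y) <+: s.rotate i)).card =
    ((Finset.range s.length).filter (fun i => y <+: s.rotate i ∧
        (s.rotate i).getLast? = some c)).card :=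
  stmt4_general s c y hy
end

section
/- Toehold step for local orderings: let s be a primitive string of length n over Σ whose rotation matrix is sorted by a local ordering of context length 1, let y be a string with 1 ≤ |y| < n that is a prefix of at least one rotation of s, and let v be the ≺-maximum rotation having prefix y. If the last symbol of v is c ∈ Σ, then the right shift of v is the ≺-maximum rotation having prefix c·y. -/
/-
Write the maximal rotation as `v ++ [c]`; its right shift is `c :: v`, and `|y| < n` makes `y` a
prefix of `v`. A rotation `c :: u` with prefix `c·y` is the right shift of `u ++ [c]`, which has
prefix `y` and so is `≼ v ++ [c]`. When `u ≠ v` these two rotations first differ inside `u` and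
`v`, after a common prefix `x` that contains `y` and is therefore nonempty; prepending `c` turns
the context into `c·x`, which ends with the same symbol as `x`, so by locality the comparison is
unchanged.
-/

open scoped Classical

variable {A : Type*}

/-- The index of the right shift of the rotation `R_i` of a string of length
`n`, i.e. `(i - 1) mod n`. -/
def rshift (n i : ℕ) : ℕ := (i + n - 1) % n

section Lcp

variable [DecidableEq A]

theorem lcp_cons_cons (c : A) (l₁ l₂ : List A) :
    lcp (c :: l₁) (c :: l₂) = c :: lcp l₁ l₂ := by
  simp [lcp]

theorem prefix_lcp {y l₁ l₂ : List A} (h₁ : y <+: l₁) (h₂ : y <+: l₂) : y <+: lcp l₁ l₂ := by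
  induction y generalizing l₁ l₂ with
  | nil => exact List.nil_prefix
  | cons a y ih =>
    obtain ⟨t₁, rfl⟩ := h₁
    obtain ⟨t₂, rfl⟩ := h₂
    rw [List.cons_append, List.cons_append, lcp_cons_cons, List.cons_prefix_cons]
    exact ⟨rfl, ih (y.prefix_append t₁) (y.prefix_append t₂)⟩

theorem length_lcp_lt {l₁ l₂ : List A} (hlen : l₁.length = l₂.length) (hne : l₁ ≠ l₂) :
    (lcp l₁ l₂).length < l₁.length := by
  induction l₁ generalizing l₂ with
  | nil => cases l₂ <;> simp_all
  | cons a l₁ ih =>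
    cases l₂ with
    | nil => simp at hlen
    | cons b l₂ =>
      by_cases hab : a = b
      · subst hab
        rw [lcp_cons_cons, List.length_cons, List.length_cons]
        exact Nat.succ_lt_succ (ih (by simpa using hlen) (by simpa using hne))
      · simp [lcp, hab]

theorem lcp_append_singleton {l₁ l₂ : List A} (hlen : l₁.length = l₂.length) (hne : l₁ ≠ l₂)
    (c d : A) : lcp (l₁ ++ [c]) (l₂ ++ [d]) = lcp l₁ l₂ := by
  induction l₁ generalizing l₂ with
  | nil => cases l₂ <;> simp_all
  | cons a l₁ ih =>
    cases l₂ with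
    | nil => simp at hlen
    | cons b l₂ =>
      by_cases hab : a = b
      · subst hab
        rw [List.cons_append, List.cons_append, lcp_cons_cons, lcp_cons_cons,
          ih (by simpa using hlen) (by simpa using hne)]
      · simp [lcp, hab]

theorem Prec.cons_of_append_singleton {π : List A → A → A → Prop}
    (hloc : ∀ (x y : List A) (c : A), π (x ++ [c]) = π (y ++ [c]))
    {u v : List A} {c : A} (hlen : u.length = v.length) (hne : u ≠ v) (hlcp : lcp u v ≠ [])
    (h : Prec π (u ++ [c]) (v ++ [c])) : Prec π (c :: u) (c :: v) := by
  obtain ⟨a, b, ha, hb, hab⟩ := h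
  have hlt := length_lcp_lt hlen hne
  rw [lcp_append_singleton hlen hne] at ha hb hab
  rw [List.getElem?_append_left hlt] at ha
  rw [List.getElem?_append_left (hlen ▸ hlt)] at hb
  obtain ⟨x, d, hx⟩ := (List.eq_nil_or_concat' (lcp u v)).resolve_left hlcp
  refine ⟨a, b, ?_, ?_, ?_⟩
  · simpa [lcp_cons_cons] using ha
  · simpa [lcp_cons_cons] using hb
  · rw [lcp_cons_cons, hx, ← List.cons_append, hloc (c :: x) x d, ← hx]
    exact hab

end Lcp

theorem List.eq_cons_of_rotate_one_eq {l u : List A} {c : A} (h : l.rotate 1 = u ++ [c]) :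
    l = c :: u := by
  cases l with
  | nil => simp at h
  | cons d w =>
    simp only [List.rotate_cons_succ, List.rotate_zero] at h
    obtain ⟨rfl, hd⟩ := List.append_inj h (by simpa using congrArg List.length h)
    simp_all

theorem rotate_rshift_rotate_one (s : List A) (i : ℕ) :
    (s.rotate (rshift s.length i)).rotate 1 = s.rotate i := by
  rcases Nat.eq_zero_or_pos s.length with hn | hn
  · simp [List.length_eq_zero_iff.mp hn]
  · rw [List.rotate_rotate, ← List.rotate_mod, ← List.rotate_mod s i, rshift, Nat.mod_add_mod,
      show i + s.length - 1 + 1 = i + s.length by omega, Nat.add_mod_right]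

theorem stmt12_general [DecidableEq A]
    (π : List A → A → A → Prop)
    (hloc : ∀ (x y : List A) (c : A), π (x ++ [c]) = π (y ++ [c]))
    (s : List A)
    (y : List A) (hy1 : 1 ≤ y.length) (hy2 : y.length < s.length)
    (i : ℕ) (hpre : y <+: s.rotate i)
    (hmax : ∀ j < s.length, y <+: s.rotate j →
      s.rotate j = s.rotate i ∨ Prec π (s.rotate j) (s.rotate i))
    (c : A) (hc : (s.rotate i).getLast? = some c) :
    (c :: y) <+: s.rotate (rshift s.length i) ∧
    ∀ j < s.length, (c :: y) <+: s.rotate j →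
      s.rotate j = s.rotate (rshift s.length i) ∨
      Prec π (s.rotate j) (s.rotate (rshift s.length i)) := by
  obtain ⟨v, hv⟩ := List.getLast?_eq_some_iff.mp hc
  have hvlen : v.length + 1 = s.length := by simpa using (congrArg List.length hv).symm
  have hshift : s.rotate (rshift s.length i) = c :: v :=
    List.eq_cons_of_rotate_one_eq (by rw [rotate_rshift_rotate_one, hv])
  have hyv : y <+: v := List.prefix_of_prefix_length_le (hv ▸ hpre) (v.prefix_append [c]) (by omega)
  refine ⟨hshift ▸ List.cons_prefix_cons.mpr ⟨rfl, hyv⟩, fun j _ hj => ?_⟩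
  obtain ⟨u, hyu, hj⟩ : ∃ u, y <+: u ∧ s.rotate j = c :: u := by
    obtain ⟨t, ht⟩ := hj
    exact ⟨y ++ t, y.prefix_append t, by rw [← ht, List.cons_append]⟩
  rw [hshift, hj]
  by_cases hu : u = v
  · exact .inl (hu ▸ rfl)
  have hnext : s.rotate ((j + 1) % s.length) = u ++ [c] := by
    rw [List.rotate_mod, ← List.rotate_rotate, hj]; simp
  have hulen : u.length = v.length := by
    have := congrArg List.length hnext
    simp only [List.length_rotate, List.length_append, List.length_singleton] at this
    omega
  have hprec : Prec π (u ++ [c]) (v ++ [c]) := by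
    rcases hmax _ (Nat.mod_lt _ (by omega)) (hnext ▸ hyu.trans (u.prefix_append [c]))
      with heq | hprec
    · exact absurd (List.append_inj_left' (hnext ▸ hv ▸ heq) rfl) hu
    · rwa [hnext, hv] at hprec
  refine .inr (hprec.cons_of_append_singleton hloc hulen hu fun hnil => ?_)
  have hylcp := prefix_lcp hyu hyv
  rw [hnil, List.prefix_nil] at hylcp
  exact absurd hylcp (List.ne_nil_of_length_pos hy1)

/-- toehold step for local orderings of context length 1.  If
`v = s.rotate i` is the `≺`-maximum rotation having prefix `y`
(`1 ≤ |y| < n`), and `v` ends with `c`, then the right shift of `v` is the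
`≺`-maximum rotation having prefix `c·y`. -/
theorem stmt12 [Fintype A] [DecidableEq A]
    (π : List A → A → A → Prop) (hπ : ∀ x, IsStrictTotalOrder A (π x))
    (hloc : ∀ (x y : List A) (c : A), π (x ++ [c]) = π (y ++ [c]))
    (s : List A) (hs : 1 ≤ s.length) (hprim : Primitive s)
    (y : List A) (hy1 : 1 ≤ y.length) (hy2 : y.length < s.length)
    (i : ℕ) (hi : i < s.length) (hpre : y <+: s.rotate i)
    (hmax : ∀ j < s.length, y <+: s.rotate j →
      s.rotate j = s.rotate i ∨ Prec π (s.rotate j) (s.rotate i))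
    (c : A) (hc : (s.rotate i).getLast? = some c) :
    (c :: y) <+: s.rotate (rshift s.length i) ∧
    ∀ j < s.length, (c :: y) <+: s.rotate j →
      s.rotate j = s.rotate (rshift s.length i) ∨
      Prec π (s.rotate j) (s.rotate (rshift s.length i)) :=
  stmt12_general π hloc s y hy1 hy2 i hpre hmax c hc
end
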